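/- If W_KᵀUᵀU W_K is positive definite, then as σ → 0 the guided mean ν(σ) converges to W_K⁻¹-pullback of the query: ν(σ) → (W_KᵀUᵀUW_K)⁻¹ W_KᵀUᵀU W_Q ψ₀. -/

import Mathlib

/-!
Multiplying numerator and denominator by σ² writes the guided mean as
`(σ² • Σ_T⁻¹ + K)⁻¹ *ᵥ (σ² • Σ_T⁻¹ μ_K + b)` with `K = W_KᵀUᵀUW_K` and `b = W_KᵀUᵀUW_Qψ₀`. This is
continuous in `σ²` at `0` because `K` is invertible, and its value there is `K⁻¹ *ᵥ b`.
-/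

open Matrix Filter Topology

namespace Matrix

variable {n 𝕜 : Type*} [Fintype n] [DecidableEq n] [Field 𝕜]

/-- Unlike `Matrix.inv_smul'`, no invertibility of `A` is needed: for singular `A` both sides are
the junk value `0`. -/
theorem inv_smul_of_ne_zero (A : Matrix n n 𝕜) {k : 𝕜} (hk : k ≠ 0) :
    (k • A)⁻¹ = k⁻¹ • A⁻¹ := by
  by_cases hA : IsUnit A.det
  · simpa [Units.smul_def] using inv_smul' A (Units.mk0 k hk) hA
  · have hkA : ¬IsUnit (k • A).det := by
      simpa [det_smul, hk] using hA
    rw [nonsing_inv_apply_not_isUnit _ hA, nonsing_inv_apply_not_isUnit _ hkA, smul_zero]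

theorem inv_add_inv_smul_mulVec_add_inv_smul (A K : Matrix n n 𝕜) (a b : n → 𝕜)
    {s : 𝕜} (hs : s ≠ 0) :
    (A + s⁻¹ • K)⁻¹ *ᵥ (a + s⁻¹ • b) = (s • A + K)⁻¹ *ᵥ (s • a + b) := by
  have hmat : A + s⁻¹ • K = s⁻¹ • (s • A + K) := by
    rw [smul_add, smul_smul, inv_mul_cancel₀ hs, one_smul]
  have hvec : s • a + b = s • (a + s⁻¹ • b) := by
    rw [smul_add, smul_smul, mul_inv_cancel₀ hs, one_smul]
  rw [hmat, inv_smul_of_ne_zero _ (inv_ne_zero hs), inv_inv, hvec, smul_mulVec, mulVec_smul]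

theorem tendsto_smul_add_inv_mulVec_smul_add [TopologicalSpace 𝕜] [IsTopologicalDivisionRing 𝕜]
    (A K : Matrix n n 𝕜) (a b : n → 𝕜) (hK : IsUnit K) :
    Tendsto (fun s : 𝕜 => (s • A + K)⁻¹ *ᵥ (s • a + b)) (𝓝 0) (𝓝 (K⁻¹ *ᵥ b)) := by
  have hinv : ContinuousAt (fun s : 𝕜 => (s • A + K)⁻¹) 0 := by
    refine ContinuousAt.comp (f := fun s : 𝕜 => s • A + K) ?_ (by fun_prop)
    refine continuousAt_matrix_inv _ ?_
    simp only [zero_smul, zero_add, Ring.inverse_eq_inv']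
    exact continuousAt_inv₀ (isUnit_iff_ne_zero.mp ((isUnit_iff_isUnit_det K).mp hK))
  have hcont : ContinuousAt (fun s : 𝕜 => (s • A + K)⁻¹ *ᵥ (s • a + b)) 0 :=
    (continuous_fst.matrix_mulVec continuous_snd).continuousAt.comp
      (hinv.prodMk (by fun_prop))
  simpa using hcont.tendsto

end Matrix

theorem guided_mean_small_sigma_general (d : ℕ) (ST : Matrix (Fin d) (Fin d) ℝ)
    (μK ψ₀ : Fin d → ℝ) (U WK WQ : Matrix (Fin d) (Fin d) ℝ)
    (hK : (WKᵀ * Uᵀ * U * WK).PosDef) :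
    Tendsto
      (fun σ : ℝ =>
        ((ST⁻¹ + (σ ^ 2)⁻¹ • (WKᵀ * Uᵀ * U * WK))⁻¹).mulVec
          (ST⁻¹.mulVec μK + (σ ^ 2)⁻¹ • (WKᵀ * Uᵀ * U * WQ).mulVec ψ₀))
      (nhdsWithin 0 (Set.Ioi 0))
      (nhds ((WKᵀ * Uᵀ * U * WK)⁻¹.mulVec ((WKᵀ * Uᵀ * U * WQ).mulVec ψ₀))) := by
  have hsq : Tendsto (fun σ : ℝ => σ ^ 2) (𝓝[>] 0) (𝓝 0) :=
    ((continuous_pow 2).tendsto' 0 0 (zero_pow two_ne_zero)).mono_left nhdsWithin_le_nhds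
  refine ((tendsto_smul_add_inv_mulVec_smul_add ST⁻¹ _ (ST⁻¹ *ᵥ μK) _ hK.isUnit).comp hsq).congr'
    ?_
  filter_upwards [self_mem_nhdsWithin] with σ (hσ : 0 < σ)
  exact (inv_add_inv_smul_mulVec_add_inv_smul _ _ _ _ (pow_pos hσ 2).ne').symm

/-- If W_KᵀUᵀUW_K is positive definite, as σ → 0⁺ the guided mean converges to
(W_KᵀUᵀUW_K)⁻¹W_KᵀUᵀUW_Qψ₀. -/
theorem guided_mean_small_sigma (d : ℕ) (ST : Matrix (Fin d) (Fin d) ℝ) (hST : ST.PosDef)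
    (μK ψ₀ : Fin d → ℝ) (U WK WQ : Matrix (Fin d) (Fin d) ℝ)
    (hK : (WKᵀ * Uᵀ * U * WK).PosDef) :
    Tendsto
      (fun σ : ℝ =>
        ((ST⁻¹ + (σ ^ 2)⁻¹ • (WKᵀ * Uᵀ * U * WK))⁻¹).mulVec
          (ST⁻¹.mulVec μK + (σ ^ 2)⁻¹ • (WKᵀ * Uᵀ * U * WQ).mulVec ψ₀))
      (nhdsWithin 0 (Set.Ioi 0))
      (nhds ((WKᵀ * Uᵀ * U * WK)⁻¹.mulVec ((WKᵀ * Uᵀ * U * WQ).mulVec ψ₀))) :=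
  guided_mean_small_sigma_general d ST μK ψ₀ U WK WQ hK
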